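/- Let d ≥ 1, T > 0, let S ⊆ ℝ^d be a nonempty closed set, and let Y ∈ C([0,T]; ℝ^d). Set τ = inf( {t ∈ [0,T] : Y_t ∈ S} ∪ {T} ). For each integer N ≥ 1 let h_N : [0,∞) → ℝ be continuous with 0 ≤ h_N ≤ 1, h_N(r) = 1 for r ≥ 1/N, and h_N(r) = r for 0 ≤ r ≤ 1/(2N), and define p^N(t) = ∫_0^t min(1, h_N( min_{r ∈ [0,s]} dist(Y_r, S) )) ds for t ∈ [0,T]. Then: (a) p^N(t) = t for every t ∈ [0,T] such that dist(Y_r, S) ≥ 1/N for all r ∈ [0,t); and (b) sup_{t ∈ [0,T]} | Y(p^N(t)) − Y(t ∧ τ) | → 0 as N → ∞. -/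

import Mathlib

/-! The integrand of `p^N` lies in `[0,1]`; it equals `1` while the running distance to `S` is at
least `1/N`, and `0` after the hitting time `τ` (the running distance is then `0` and
`h_N(0) = 0`). Hence `t ∧ s₀ ≤ p^N(t) ≤ t ∧ τ` as soon as the running distance at time `s₀` is at
least `1/N`. For `s₀ = τ - ε` this running distance is positive, since `S` is closed and the
minimum over `[0, s₀]` is attained, so `p^N(t) → t ∧ τ` uniformly in `t`; uniform continuity of
`Y` on the compact interval `[0,T]` gives (b). -/

open MeasureTheory Set Filter

/-- The running minimum distance of the path `Y` to the set `S` over times `r ∈ [0,s]`. -/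
noncomputable def runMinDist {d : ℕ} {T : ℝ} (S : Set (EuclideanSpace ℝ (Fin d)))
    (Y : C(Set.Icc (0 : ℝ) T, EuclideanSpace ℝ (Fin d))) (s : ℝ) : ℝ :=
  sInf ((fun r : Set.Icc (0 : ℝ) T => Metric.infDist (Y r) S) '' {r | (r : ℝ) ≤ s})

/-- `p^N(t) = ∫_0^t min(1, h_N(min_{r ∈ [0,s]} dist(Y_r, S))) ds`. -/
noncomputable def timeChange {d : ℕ} {T : ℝ} (S : Set (EuclideanSpace ℝ (Fin d)))
    (h : ℝ → ℝ) (Y : C(Set.Icc (0 : ℝ) T, EuclideanSpace ℝ (Fin d))) (t : ℝ) : ℝ :=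
  ∫ s in (0 : ℝ)..t, min 1 (h (runMinDist S Y s))

/-- First hitting time of `S` by `Y`, truncated at `T`. -/
noncomputable def hitTime {d : ℕ} {T : ℝ} (S : Set (EuclideanSpace ℝ (Fin d)))
    (Y : C(Set.Icc (0 : ℝ) T, EuclideanSpace ℝ (Fin d))) : ℝ :=
  sInf ({t : ℝ | ∃ ht : t ∈ Set.Icc (0 : ℝ) T, Y ⟨t, ht⟩ ∈ S} ∪ {T})

section RunMinDist

variable {d : ℕ} {T : ℝ} {S : Set (EuclideanSpace ℝ (Fin d))}
  {Y : C(Icc (0 : ℝ) T, EuclideanSpace ℝ (Fin d))}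

lemma runMinDist_nonneg (s : ℝ) : 0 ≤ runMinDist S Y s :=
  Real.sInf_nonneg <| by rintro _ ⟨r, -, rfl⟩; exact Metric.infDist_nonneg

lemma runMinDist_le_infDist {r : Icc (0 : ℝ) T} {s : ℝ} (hr : (r : ℝ) ≤ s) :
    runMinDist S Y s ≤ Metric.infDist (Y r) S :=
  csInf_le ⟨0, by rintro _ ⟨r, -, rfl⟩; exact Metric.infDist_nonneg⟩ ⟨r, hr, rfl⟩

lemma runMinDist_of_neg {s : ℝ} (hs : s < 0) : runMinDist S Y s = 0 := by
  have : {r : Icc (0 : ℝ) T | (r : ℝ) ≤ s} = ∅ :=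
    eq_empty_of_forall_notMem fun r hr => (r.2.1.trans hr).not_gt hs
  simp [runMinDist, this]

lemma exists_infDist_eq_runMinDist (hT : 0 ≤ T) {s : ℝ} (hs : 0 ≤ s) :
    ∃ r : Icc (0 : ℝ) T, (r : ℝ) ≤ s ∧ Metric.infDist (Y r) S = runMinDist S Y s := by
  have hne : {r : Icc (0 : ℝ) T | (r : ℝ) ≤ s}.Nonempty := ⟨⟨0, le_rfl, hT⟩, hs⟩
  obtain ⟨r, hr, hmin⟩ := (isClosed_le continuous_subtype_val continuous_const).isCompact
    |>.exists_isMinOn hne ((Metric.continuous_infDist_pt S).comp Y.continuous).continuousOn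
  refine ⟨r, hr, le_antisymm ?_ (runMinDist_le_infDist hr)⟩
  exact le_csInf (hne.image _) (by rintro _ ⟨r', hr', rfl⟩; exact hmin hr')

lemma le_runMinDist (hT : 0 ≤ T) {s c : ℝ} (hs : 0 ≤ s)
    (H : ∀ r : Icc (0 : ℝ) T, (r : ℝ) ≤ s → c ≤ Metric.infDist (Y r) S) :
    c ≤ runMinDist S Y s := by
  obtain ⟨r, hr, hrs⟩ := exists_infDist_eq_runMinDist (Y := Y) (S := S) hT hs
  exact hrs ▸ H r hr

lemma antitoneOn_runMinDist (hT : 0 ≤ T) : AntitoneOn (runMinDist S Y) (Ici 0) := by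
  intro a ha b _ hab
  obtain ⟨r, hr, hra⟩ := exists_infDist_eq_runMinDist (Y := Y) (S := S) hT ha
  exact hra ▸ runMinDist_le_infDist (hr.trans hab)

lemma measurable_runMinDist (hT : 0 ≤ T) : Measurable (runMinDist S Y) := by
  -- for `s < 0` the infimum is over `∅`, so `runMinDist` is antitone only on `[0, ∞)`
  have hanti : Antitone fun s => runMinDist S Y (max s 0) := fun a b hab =>
    antitoneOn_runMinDist hT (le_max_right a 0 : (0 : ℝ) ≤ _) (le_max_right b 0)
      (max_le_max_right 0 hab)
  convert hanti.measurable.indicator (measurableSet_Ici (a := (0 : ℝ))) using 1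
  ext s
  rcases lt_or_ge s 0 with hs | hs
  · simp [runMinDist_of_neg hs, indicator_of_notMem (notMem_Ici.2 hs)]
  · simp [indicator_of_mem (mem_Ici.2 hs), max_eq_left hs]

end RunMinDist

section HitTime

variable {d : ℕ} {T : ℝ} {S : Set (EuclideanSpace ℝ (Fin d))}
  {Y : C(Icc (0 : ℝ) T, EuclideanSpace ℝ (Fin d))}

lemma bddBelow_hitTime_set (hT : 0 ≤ T) :
    BddBelow ({t : ℝ | ∃ ht : t ∈ Icc (0 : ℝ) T, Y ⟨t, ht⟩ ∈ S} ∪ {T}) :=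
  ⟨0, by rintro b (⟨hb, -⟩ | rfl); exacts [hb.1, hT]⟩

lemma hitTime_nonneg (hT : 0 ≤ T) : 0 ≤ hitTime S Y :=
  le_csInf ⟨T, Or.inr rfl⟩ (by rintro b (⟨hb, -⟩ | rfl); exacts [hb.1, hT])

lemma hitTime_le_of_mem (hT : 0 ≤ T) {r : Icc (0 : ℝ) T} (hr : Y r ∈ S) :
    hitTime S Y ≤ r :=
  csInf_le (bddBelow_hitTime_set hT) (Or.inl ⟨r.2, hr⟩)

lemma exists_eq_hitTime_of_lt (hScl : IsClosed S) (hτ : hitTime S Y < T) :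
    ∃ r : Icc (0 : ℝ) T, (r : ℝ) = hitTime S Y ∧ Y r ∈ S := by
  set H := {t : ℝ | ∃ ht : t ∈ Icc (0 : ℝ) T, Y ⟨t, ht⟩ ∈ S}
  have hH : H = Subtype.val '' (Y ⁻¹' S) := by
    ext t
    exact ⟨fun ⟨ht, hY⟩ => ⟨⟨t, ht⟩, hY, rfl⟩, by rintro ⟨r, hY, rfl⟩; exact ⟨r.2, hY⟩⟩
  have hHne : H.Nonempty := by
    by_contra hemp
    change sInf (H ∪ {T}) < T at hτ
    rw [not_nonempty_iff_eq_empty.1 hemp, empty_union, csInf_singleton] at hτ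
    exact hτ.false
  have hmem : sInf H ∈ H :=
    (hH ▸ ((hScl.preimage Y.continuous).isCompact.image continuous_subtype_val)).sInf_mem hHne
  have heq : hitTime S Y = sInf H := by
    rw [hitTime, csInf_union ⟨0, fun b hb => hb.1.1⟩ hHne bddBelow_singleton
      (singleton_nonempty T), csInf_singleton, inf_of_le_left hmem.1.2]
  obtain ⟨hIcc, hY⟩ := hmem
  exact ⟨⟨sInf H, hIcc⟩, heq.symm, hY⟩

lemma runMinDist_eq_zero_of_hitTime_le (hScl : IsClosed S) (hτ : hitTime S Y < T) {s : ℝ}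
    (hs : hitTime S Y ≤ s) : runMinDist S Y s = 0 := by
  obtain ⟨r, hr, hrS⟩ := exists_eq_hitTime_of_lt hScl hτ
  refine le_antisymm ?_ (runMinDist_nonneg s)
  exact (runMinDist_le_infDist (hr ▸ hs)).trans_eq (Metric.infDist_zero_of_mem hrS)

lemma runMinDist_pos_of_lt_hitTime (hT : 0 ≤ T) (hSne : S.Nonempty) (hScl : IsClosed S)
    {s : ℝ} (hs₀ : 0 ≤ s) (hs : s < hitTime S Y) : 0 < runMinDist S Y s := by
  obtain ⟨r, hr, hrs⟩ := exists_infDist_eq_runMinDist (Y := Y) (S := S) hT hs₀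
  refine (runMinDist_nonneg s).lt_of_ne fun h0 => ?_
  have hrS : Y r ∈ S := (hScl.mem_iff_infDist_zero hSne).2 (hrs.trans h0.symm)
  exact (hs.trans_le ((hitTime_le_of_mem hT hrS).trans hr)).false

end HitTime

section TimeChange

variable {d : ℕ} {T : ℝ} {S : Set (EuclideanSpace ℝ (Fin d))}
  {Y : C(Icc (0 : ℝ) T, EuclideanSpace ℝ (Fin d))} {h : ℝ → ℝ}

lemma timeChange_integrand_mem_Icc (hh : ∀ r, 0 ≤ r → 0 ≤ h r) (s : ℝ) :
    min 1 (h (runMinDist S Y s)) ∈ Icc (0 : ℝ) 1 :=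
  ⟨le_min zero_le_one (hh _ (runMinDist_nonneg s)), min_le_left _ _⟩

lemma intervalIntegrable_timeChange_integrand (hT : 0 ≤ T) (hcont : Continuous h)
    (hh : ∀ r, 0 ≤ r → 0 ≤ h r) (a b : ℝ) :
    IntervalIntegrable (fun s => min 1 (h (runMinDist S Y s))) volume a b := by
  refine (intervalIntegrable_const (c := (1 : ℝ))).mono_fun
    (measurable_const.min (hcont.measurable.comp (measurable_runMinDist hT))).aestronglyMeasurable
    (Eventually.of_forall fun s => ?_)
  obtain ⟨h0, h1⟩ := timeChange_integrand_mem_Icc (S := S) (Y := Y) hh s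
  simp [abs_of_nonneg h0, h1]

lemma timeChange_sub_eq_integral (hT : 0 ≤ T) (hcont : Continuous h)
    (hh : ∀ r, 0 ≤ r → 0 ≤ h r) (a b : ℝ) :
    timeChange S h Y b - timeChange S h Y a = ∫ s in a..b, min 1 (h (runMinDist S Y s)) :=
  intervalIntegral.integral_interval_sub_left
    (intervalIntegrable_timeChange_integrand hT hcont hh 0 b)
    (intervalIntegrable_timeChange_integrand hT hcont hh 0 a)

lemma monotone_timeChange (hT : 0 ≤ T) (hcont : Continuous h) (hh : ∀ r, 0 ≤ r → 0 ≤ h r) :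
    Monotone (timeChange S h Y) := fun a b hab => by
  rw [← sub_nonneg, timeChange_sub_eq_integral hT hcont hh]
  exact intervalIntegral.integral_nonneg hab fun s _ => (timeChange_integrand_mem_Icc hh s).1

lemma timeChange_sub_le (hT : 0 ≤ T) (hcont : Continuous h) (hh : ∀ r, 0 ≤ r → 0 ≤ h r)
    {a b : ℝ} (hab : a ≤ b) : timeChange S h Y b - timeChange S h Y a ≤ b - a := by
  rw [timeChange_sub_eq_integral hT hcont hh]
  calc (∫ s in a..b, min 1 (h (runMinDist S Y s))) ≤ ∫ _ in a..b, (1 : ℝ) :=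
        intervalIntegral.integral_mono_on hab
          (intervalIntegrable_timeChange_integrand hT hcont hh a b) intervalIntegrable_const
          fun s _ => min_le_left _ _
    _ = b - a := by simp

lemma timeChange_zero : timeChange S h Y 0 = 0 := by
  simp [timeChange]

lemma timeChange_eq_self (hT : 0 ≤ T) {c : ℝ} (hone : ∀ r, c ≤ r → h r = 1) {t : ℝ} (ht : 0 ≤ t)
    (H : ∀ r : Icc (0 : ℝ) T, (r : ℝ) < t → c ≤ Metric.infDist (Y r) S) :
    timeChange S h Y t = t := by
  have key : ∀ᵐ s : ℝ, s ∈ uIoc 0 t → min 1 (h (runMinDist S Y s)) = 1 := by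
    filter_upwards [Measure.ae_ne volume t] with s hst hs
    rw [uIoc_of_le ht] at hs
    have hc : c ≤ runMinDist S Y s :=
      le_runMinDist hT hs.1.le fun r hr => H r (hr.trans_lt (hs.2.lt_of_ne hst))
    rw [hone _ hc, min_self]
  rw [timeChange, intervalIntegral.integral_congr_ae key]
  simp

lemma min_le_timeChange (hT : 0 ≤ T) (hcont : Continuous h) (hh : ∀ r, 0 ≤ r → 0 ≤ h r)
    {c : ℝ} (hone : ∀ r, c ≤ r → h r = 1) {s₀ t : ℝ} (hs₀ : 0 ≤ s₀) (ht : 0 ≤ t)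
    (hc : c ≤ runMinDist S Y s₀) : min t s₀ ≤ timeChange S h Y t := by
  have hmin : timeChange S h Y (min t s₀) = min t s₀ :=
    timeChange_eq_self hT hone (le_min ht hs₀) fun r hr =>
      hc.trans (runMinDist_le_infDist (hr.le.trans (min_le_right _ _)))
  exact hmin ▸ monotone_timeChange hT hcont hh (min_le_left t s₀)

lemma timeChange_le_min_hitTime (hT : 0 ≤ T) (hScl : IsClosed S) (hcont : Continuous h)
    (hh : ∀ r, 0 ≤ r → 0 ≤ h r) (h0 : h 0 = 0) {t : ℝ} (ht : t ∈ Icc 0 T) :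
    timeChange S h Y t ≤ min t (hitTime S Y) := by
  have hle_self : ∀ {u}, 0 ≤ u → timeChange S h Y u ≤ u := fun hu => by
    simpa [timeChange_zero] using timeChange_sub_le (S := S) (Y := Y) hT hcont hh hu
  rcases le_or_gt t (hitTime S Y) with htτ | hτt
  · exact (min_eq_left htτ).symm ▸ hle_self ht.1
  -- after the hit the running minimum is `0`, so the integrand is `min 1 (h 0) = 0`
  have hflat : timeChange S h Y t = timeChange S h Y (hitTime S Y) := by
    rw [← sub_eq_zero, timeChange_sub_eq_integral hT hcont hh]
    refine (intervalIntegral.integral_congr fun s hs => ?_).trans intervalIntegral.integral_zero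
    rw [uIcc_of_le hτt.le] at hs
    simp [runMinDist_eq_zero_of_hitTime_le hScl (hτt.trans_le ht.2) hs.1, h0]
  rw [min_eq_right hτt.le, hflat]
  exact hle_self (hitTime_nonneg hT)

end TimeChange

theorem tendstoUniformly_timeChange {d : ℕ} {T : ℝ} (hT : 0 ≤ T)
    {S : Set (EuclideanSpace ℝ (Fin d))} (hSne : S.Nonempty) (hScl : IsClosed S)
    {Y : C(Icc (0 : ℝ) T, EuclideanSpace ℝ (Fin d))} {h : ℕ → ℝ → ℝ}
    (hcont : ∀ N, 1 ≤ N → Continuous (h N)) (hh : ∀ N, 1 ≤ N → ∀ r, 0 ≤ r → 0 ≤ h N r)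
    (hone : ∀ N : ℕ, 1 ≤ N → ∀ r, 1 / (N : ℝ) ≤ r → h N r = 1) (h0 : ∀ N, 1 ≤ N → h N 0 = 0) :
    TendstoUniformly (fun N (t : Icc (0 : ℝ) T) => timeChange S (h N) Y t)
      (fun t => min (t : ℝ) (hitTime S Y)) atTop := by
  rw [Metric.tendstoUniformly_iff]
  intro ε hε
  have hupper : ∀ᶠ N in atTop, ∀ t : Icc (0 : ℝ) T,
      timeChange S (h N) Y t ≤ min (t : ℝ) (hitTime S Y) :=
    eventually_atTop.2 ⟨1, fun N hN t =>
      timeChange_le_min_hitTime hT hScl (hcont N hN) (hh N hN) (h0 N hN) t.2⟩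
  have hlower : ∀ᶠ N in atTop, ∀ t : Icc (0 : ℝ) T,
      min (t : ℝ) (hitTime S Y) - ε / 2 ≤ timeChange S (h N) Y t := by
    rcases le_or_gt (hitTime S Y) (ε / 2) with hτ | hτ
    · filter_upwards [eventually_ge_atTop 1] with N hN t
      have hp := monotone_timeChange (S := S) (Y := Y) hT (hcont N hN) (hh N hN) t.2.1
      rw [timeChange_zero] at hp
      linarith [min_le_right (t : ℝ) (hitTime S Y)]
    set s₀ := hitTime S Y - ε / 2 with hs₀
    have hc : 0 < runMinDist S Y s₀ :=
      runMinDist_pos_of_lt_hitTime hT hSne hScl (by linarith) (by linarith)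
    filter_upwards [eventually_ge_atTop 1,
      tendsto_one_div_atTop_nhds_zero_nat.eventually (gt_mem_nhds hc)] with N hN hNc t
    have hp := min_le_timeChange hT (hcont N hN) (hh N hN) (hone N hN) (by linarith) t.2.1 hNc.le
    have hmin : min (t : ℝ) (hitTime S Y) ≤ min (t : ℝ) s₀ + ε / 2 := by
      rw [← min_add_add_right]
      exact min_le_min (by linarith) (by linarith)
    linarith
  filter_upwards [hupper, hlower] with N hup hlow t
  rw [Real.dist_eq, abs_sub_lt_iff]
  constructor <;> linarith [hup t, hlow t]

theorem TendstoUniformly.tendsto_iSup_dist {ι α β : Type*} [PseudoMetricSpace β]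
    {F : ι → α → β} {f : α → β} {l : Filter ι} (hF : TendstoUniformly F f l) :
    Tendsto (fun i => ⨆ x, dist (F i x) (f x)) l (nhds 0) := by
  rw [Metric.tendsto_nhds]
  intro ε hε
  filter_upwards [Metric.tendstoUniformly_iff.1 hF (ε / 2) (half_pos hε)] with i hi
  rw [Real.dist_0_eq_abs, abs_of_nonneg (Real.iSup_nonneg fun x => dist_nonneg)]
  refine (Real.iSup_le (fun x => ?_) (half_pos hε).le).trans_lt (half_lt_self hε)
  exact (dist_comm _ _).trans_le (hi x).le

theorem stmt4_general
    (d : ℕ) (T : ℝ) (hT : 0 < T)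
    (S : Set (EuclideanSpace ℝ (Fin d))) (hSne : S.Nonempty) (hScl : IsClosed S)
    (Y : C(Set.Icc (0 : ℝ) T, EuclideanSpace ℝ (Fin d)))
    (h : ℕ → ℝ → ℝ)
    (hhcont : ∀ N : ℕ, 1 ≤ N → Continuous (h N))
    (hh01 : ∀ N : ℕ, 1 ≤ N → ∀ r : ℝ, 0 ≤ r → h N r ∈ Set.Icc (0 : ℝ) 1)
    (hhone : ∀ N : ℕ, 1 ≤ N → ∀ r : ℝ, 1 / (N : ℝ) ≤ r → h N r = 1)
    (hhid : ∀ N : ℕ, 1 ≤ N → ∀ r : ℝ, 0 ≤ r → r ≤ 1 / (2 * (N : ℝ)) → h N r = r) :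
    (∀ N : ℕ, 1 ≤ N → ∀ t : Set.Icc (0 : ℝ) T,
      (∀ r : Set.Icc (0 : ℝ) T, (r : ℝ) < (t : ℝ) → 1 / (N : ℝ) ≤ Metric.infDist (Y r) S) →
        timeChange S (h N) Y t = (t : ℝ)) ∧
    Tendsto (fun N : ℕ => ⨆ t : Set.Icc (0 : ℝ) T,
        dist (Y (Set.projIcc 0 T hT.le (timeChange S (h N) Y t)))
          (Y (Set.projIcc 0 T hT.le (min (t : ℝ) (hitTime S Y)))))
      atTop (nhds 0) := by
  refine ⟨fun N hN t ht => timeChange_eq_self hT.le (hhone N hN) t.2.1 ht, ?_⟩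
  have hh0 : ∀ N : ℕ, 1 ≤ N → h N 0 = 0 := fun N hN => hhid N hN 0 le_rfl (by positivity)
  have hconv := tendstoUniformly_timeChange hT.le hSne hScl (Y := Y) hhcont
    (fun N hN r hr => (hh01 N hN r hr).1) hhone hh0
  have hYuc : UniformContinuous fun x => Y (projIcc 0 T hT.le x) :=
    (CompactSpace.uniformContinuous_of_continuous Y.continuous).comp
      (LipschitzWith.projIcc hT.le).uniformContinuous
  exact (hYuc.comp_tendstoUniformly hconv).tendsto_iSup_dist

theorem stmt4
    (d : ℕ) (hd : 1 ≤ d) (T : ℝ) (hT : 0 < T)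
    (S : Set (EuclideanSpace ℝ (Fin d))) (hSne : S.Nonempty) (hScl : IsClosed S)
    (Y : C(Set.Icc (0 : ℝ) T, EuclideanSpace ℝ (Fin d)))
    (h : ℕ → ℝ → ℝ)
    (hhcont : ∀ N : ℕ, 1 ≤ N → Continuous (h N))
    (hh01 : ∀ N : ℕ, 1 ≤ N → ∀ r : ℝ, 0 ≤ r → h N r ∈ Set.Icc (0 : ℝ) 1)
    (hhone : ∀ N : ℕ, 1 ≤ N → ∀ r : ℝ, 1 / (N : ℝ) ≤ r → h N r = 1)
    (hhid : ∀ N : ℕ, 1 ≤ N → ∀ r : ℝ, 0 ≤ r → r ≤ 1 / (2 * (N : ℝ)) → h N r = r) :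
    (∀ N : ℕ, 1 ≤ N → ∀ t : Set.Icc (0 : ℝ) T,
      (∀ r : Set.Icc (0 : ℝ) T, (r : ℝ) < (t : ℝ) → 1 / (N : ℝ) ≤ Metric.infDist (Y r) S) →
        timeChange S (h N) Y t = (t : ℝ)) ∧
    Tendsto (fun N : ℕ => ⨆ t : Set.Icc (0 : ℝ) T,
        dist (Y (Set.projIcc 0 T hT.le (timeChange S (h N) Y t)))
          (Y (Set.projIcc 0 T hT.le (min (t : ℝ) (hitTime S Y)))))
      atTop (nhds 0) :=
  stmt4_general d T hT S hSne hScl Y h hhcont hh01 hhone hhid
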